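/- Let n ≥ 8 be an integer and Φ = 2·cos(π/n). Then for all integers p, k, p' with p ≥ 1, k ≥ 1 and p' ≥ p + 1, one has (p·(k+1) + 1)·(Φ³ − 2Φ) < p'·k·(Φ³ − Φ) + p·(k+1)·Φ; equivalently, (p(k+1)+1)/(p'·k·(Φ³−Φ) + p(k+1)Φ) < 1/(Φ³ − 2Φ). -/
import Mathlib


/-- `Φ = 2 cos(π/n)`. -/
noncomputable def Phi (n : ℕ) : ℝ := 2 * Real.cos (Real.pi / n)

lemma phi_bounds (n : ℕ) (hn : 8 ≤ n) : Real.sqrt 3 < Phi n ∧ Phi n < 2 := by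
  have hn0 : (0:ℝ) < n := by positivity
  have h1 : Real.pi / n ≤ Real.pi / 8 := by
    apply div_le_div_of_nonneg_left Real.pi_pos.le (by norm_num)
    exact_mod_cast hn
  have h2 : Real.pi / 8 < Real.pi / 6 := by
    apply div_lt_div_of_pos_left Real.pi_pos <;> norm_num
  have hpos : 0 < Real.pi / n := by positivity
  have hcos : Real.cos (Real.pi / 6) < Real.cos (Real.pi / n) := by
    apply Real.cos_lt_cos_of_nonneg_of_le_pi hpos.le
    · linarith [Real.pi_pos]
    · linarith
  constructor
  · have := Real.cos_pi_div_six
    unfold Phi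
    nlinarith [hcos]
  · unfold Phi
    have hcos1 : Real.cos (Real.pi / n) < 1 := by
      calc Real.cos (Real.pi / n) < Real.cos 0 := by
            apply Real.cos_lt_cos_of_nonneg_of_le_pi le_rfl
            · linarith [Real.pi_pos]
            · exact hpos
          _ = 1 := Real.cos_zero
    linarith

theorem stmt6 (n : ℕ) (hn : 8 ≤ n) (p k p' : ℕ)
    (hp : 1 ≤ p) (hk : 1 ≤ k) (hp' : p + 1 ≤ p') :
    ((p : ℝ) * (k + 1) + 1) * (Phi n ^ 3 - 2 * Phi n) <
      (p' : ℝ) * k * (Phi n ^ 3 - Phi n) + (p : ℝ) * (k + 1) * Phi n := by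
  obtain ⟨h1, h2⟩ := phi_bounds n hn
  set x := Phi n with hx
  have hs : Real.sqrt 3 ^ 2 = 3 := Real.sq_sqrt (by norm_num)
  have hs0 : (0:ℝ) ≤ Real.sqrt 3 := Real.sqrt_nonneg 3
  have hx2 : 3 < x ^ 2 := by nlinarith
  have hx0 : 0 < x := by nlinarith
  have hp1 : (1:ℝ) ≤ (p:ℝ) := by exact_mod_cast hp
  have hk1 : (1:ℝ) ≤ (k:ℝ) := by exact_mod_cast hk
  have hp'1 : (p:ℝ) + 1 ≤ (p':ℝ) := by exact_mod_cast hp'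
  have key : ((p : ℝ) * (k + 1) + 1) * (x ^ 3 - 2 * x) <
      ((p:ℝ) + 1) * k * (x ^ 3 - x) + (p : ℝ) * (k + 1) * x := by
    rcases le_total ((p:ℝ) + 1) (k:ℝ) with hc | hc
    · nlinarith [mul_nonneg (mul_nonneg (sub_nonneg.2 hc) (by nlinarith : (0:ℝ) ≤ x^2 - 3)) hx0.le,
        mul_nonneg (mul_nonneg (sub_nonneg.2 hp1) (sub_nonneg.2 hk1)) hx0.le,
        mul_nonneg (sub_nonneg.2 hk1) hx0.le, hx0]
    · have h4 : (0:ℝ) ≤ 4 - x^2 := by nlinarith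
      nlinarith [mul_nonneg (mul_nonneg (by linarith : (0:ℝ) ≤ (p:ℝ) + 1 - k) h4) hx0.le,
        mul_nonneg (mul_nonneg (sub_nonneg.2 hp1) (sub_nonneg.2 hk1)) hx0.le,
        mul_nonneg (sub_nonneg.2 hk1) hx0.le, hx0]
  have mono : ((p:ℝ) + 1) * k * (x ^ 3 - x) ≤ (p':ℝ) * k * (x ^ 3 - x) := by
    apply mul_le_mul_of_nonneg_right
    · nlinarith
    · nlinarith
  linarith
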